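/- Consider the implicit vector recursion d(k) = T_k ⊗ G₀ᵀ ⊗ d(k) ⊕ T_k ⊗ d(k−1) ⊕ T_k ⊗ Σ_{m=1}^{M} G_mᵀ ⊗ d(k−m) over the max-plus semiring, where T_k is a diagonal matrix with real (non-ε) diagonal entries and the graph associated with G₀ is acyclic with longest path length p. Then the recursion is solvable explicitly as d(k) = Σ_{m=1}^{M} T_m(k) ⊗ d(k−m), with T₁(k) = (E ⊕ T_k ⊗ G₀ᵀ)^p ⊗ T_k ⊗ (E ⊕ G₁ᵀ) and T_m(k) = (E ⊕ T_k ⊗ G₀ᵀ)^p ⊗ T_k ⊗ G_mᵀ for m = 2,…,M; i.e., any vector d(k) with real entries satisfies the implicit equation iff it equals this explicit expression. -/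

import Mathlib

/-- The max-plus carrier `ℝ ∪ {-∞}` (order-dualized so that tropical `min` becomes `max`). -/
noncomputable instance : LinearOrderedAddCommMonoidWithTop (OrderDual (WithBot ℝ)) where
  __ := (inferInstance : LinearOrder (OrderDual (WithBot ℝ)))
  __ := (inferInstance : AddCommMonoid (OrderDual (WithBot ℝ)))
  __ := (inferInstance : IsOrderedAddMonoid (OrderDual (WithBot ℝ)))
  __ := (inferInstance : OrderTop (OrderDual (WithBot ℝ)))
  top_add' x := WithBot.bot_add (OrderDual.ofDual x)
  isAddLeftRegular_of_ne_top x hx := fun _ _ h =>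
    WithBot.add_left_cancel (x := OrderDual.ofDual x) hx h

/-- The max-plus semiring `⟨ℝ ∪ {-∞}, ⊕ = max, ⊗ = +⟩`; its semiring addition `+` is `max`,
its semiring multiplication `*` is real addition, and its zero `0` is `ε = -∞`. -/
abbrev MaxPlus : Type := Tropical (OrderDual (WithBot ℝ))

/-- `HasWalk X q i j` : there is a walk of length `q` from `i` to `j` in the directed
graph associated with `X` (arc `(i,j)` iff `X i j ≠ ε`). -/
def HasWalk {n : ℕ} (X : Matrix (Fin n) (Fin n) MaxPlus) (q : ℕ) (i j : Fin n) : Prop :=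
  ∃ f : Fin (q + 1) → Fin n, f 0 = i ∧ f (Fin.last q) = j ∧
    ∀ t : Fin q, X (f t.castSucc) (f t.succ) ≠ 0

/-!
Since `T_k` is diagonal, the graph of `U = T_k ⊗ G₀ᵀ` is contained in the reversed graph of
`G₀`, so a non-`ε` entry of `U^q` yields a walk of length `q` in `G₀`; the longest-path bound
then forces `U^(p+1) = ε`. Iterating `x = U x ⊕ v` gives `x = (⊕_{q ≤ p} U^q) v`, and this
vector is indeed a fixed point. In an idempotent semiring every binomial coefficient collapses
to `e`, so `⊕_{q ≤ p} U^q = (E ⊕ U)^p`, and distributing over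
`v = T_k d(k−1) ⊕ T_k ⊕_m G_mᵀ d(k−m)` yields the matrices `T_m(k)`.
-/

open Finset Matrix

theorem Nat.cast_eq_one_of_one_add_one_eq_one {R : Type*} [Semiring R] (h : (1 : R) + 1 = 1)
    {k : ℕ} (hk : k ≠ 0) : (k : R) = 1 := by
  induction k with
  | zero => exact absurd rfl hk
  | succ k ih =>
    rcases eq_or_ne k 0 with rfl | hk'
    · simp
    · rw [Nat.cast_succ, ih hk', h]

theorem one_add_pow_eq_geom_sum {R : Type*} [Semiring R] (h : (1 : R) + 1 = 1) (x : R) (p : ℕ) :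
    (1 + x) ^ p = ∑ q ∈ range (p + 1), x ^ q := by
  rw [add_comm, (Commute.one_right x).add_pow]
  refine sum_congr rfl fun q hq => ?_
  rw [one_pow, mul_one, Nat.cast_eq_one_of_one_add_one_eq_one h
    (Nat.choose_pos (Nat.lt_succ_iff.mp (mem_range.mp hq))).ne', mul_one]

theorem Matrix.one_add_one_eq_one {ι α : Type*} [DecidableEq ι] [Semiring α]
    (h : (1 : α) + 1 = 1) : (1 : Matrix ι ι α) + 1 = 1 := by
  rw [← diagonal_one, diagonal_add]
  exact congrArg diagonal (funext fun _ => h)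

theorem Matrix.eq_mulVec_add_iff_of_pow_eq_zero {ι α : Type*} [Fintype ι] [DecidableEq ι]
    [Semiring α] {U : Matrix ι ι α} {p : ℕ} (hU : U ^ (p + 1) = 0) (v x : ι → α) :
    x = U *ᵥ x + v ↔ x = (∑ q ∈ range (p + 1), U ^ q) *ᵥ v := by
  constructor
  · intro hx
    have unfold : ∀ m, x = U ^ m *ᵥ x + (∑ q ∈ range m, U ^ q) *ᵥ v := by
      intro m
      induction m with
      | zero => simp
      | succ m ih =>
        calc x = U *ᵥ (U ^ m *ᵥ x + (∑ q ∈ range m, U ^ q) *ᵥ v) + v := by rw [← ih, ← hx]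
          _ = U ^ (m + 1) *ᵥ x + (∑ q ∈ range (m + 1), U ^ q) *ᵥ v := by
            rw [geom_sum_succ, pow_succ', add_mulVec, one_mulVec, mulVec_add, mulVec_mulVec,
              mulVec_mulVec, add_assoc]
    simpa [hU] using unfold (p + 1)
  · rintro rfl
    nth_rw 3 [← one_mulVec v]
    rw [mulVec_mulVec, ← add_mulVec, ← geom_sum_succ, sum_range_succ _ (p + 1), hU, add_zero]

namespace HasWalk

variable {n : ℕ} {X Y : Matrix (Fin n) (Fin n) MaxPlus} {q : ℕ} {i j k : Fin n}

theorem refl (X : Matrix (Fin n) (Fin n) MaxPlus) (i : Fin n) : HasWalk X 0 i i :=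
  ⟨fun _ => i, rfl, rfl, fun t => t.elim0⟩

theorem snoc (h : HasWalk X q i j) (hjk : X j k ≠ 0) : HasWalk X (q + 1) i k := by
  obtain ⟨f, hf0, hfq, hf⟩ := h
  refine ⟨Fin.snoc f k, ?_, Fin.snoc_last _ _, fun t => ?_⟩
  · rw [← Fin.castSucc_zero, Fin.snoc_castSucc, hf0]
  · induction t using Fin.lastCases with
    | last => rwa [Fin.succ_last, Fin.snoc_last, Fin.snoc_castSucc, hfq]
    | cast s => rw [Fin.succ_castSucc, Fin.snoc_castSucc, Fin.snoc_castSucc]; exact hf s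

theorem mono (hXY : ∀ i j, X i j ≠ 0 → Y i j ≠ 0) (h : HasWalk X q i j) : HasWalk Y q i j :=
  let ⟨f, hf0, hfq, hf⟩ := h
  ⟨f, hf0, hfq, fun t => hXY _ _ (hf t)⟩

end HasWalk

theorem hasWalk_of_pow_apply_ne_zero {n : ℕ} {X : Matrix (Fin n) (Fin n) MaxPlus} {q : ℕ}
    {i j : Fin n} (h : (X ^ q) i j ≠ 0) : HasWalk X q i j := by
  induction q generalizing j with
  | zero =>
    obtain rfl : i = j := by
      by_contra hij
      exact h (by rw [pow_zero, one_apply_ne hij])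
    exact HasWalk.refl X i
  | succ q ih =>
    rw [pow_succ, mul_apply] at h
    obtain ⟨k, -, hk⟩ := exists_ne_zero_of_sum_ne_zero h
    exact (ih (left_ne_zero_of_mul hk)).snoc (right_ne_zero_of_mul hk)

theorem pow_succ_eq_zero_of_hasWalk_le {n p : ℕ} {X : Matrix (Fin n) (Fin n) MaxPlus}
    (hbound : ∀ q i j, HasWalk X q i j → q ≤ p) : X ^ (p + 1) = 0 := by
  ext i j
  by_contra h
  exact p.lt_succ_self.not_ge (hbound _ _ _ (hasWalk_of_pow_apply_ne_zero h))

theorem pow_succ_eq_zero_of_isDiag_mul_transpose {n p : ℕ} {D G : Matrix (Fin n) (Fin n) MaxPlus}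
    (hD : D.IsDiag) (hbound : ∀ q i j, HasWalk G q i j → q ≤ p) :
    (D * Gᵀ) ^ (p + 1) = 0 := by
  rw [← transpose_eq_zero, transpose_pow, transpose_mul, transpose_transpose,
    ← hD.diagonal_diag, diagonal_transpose]
  refine pow_succ_eq_zero_of_hasWalk_le fun q i j hw => hbound q i j (hw.mono fun i j h => ?_)
  rw [mul_diagonal] at h
  exact left_ne_zero_of_mul h

/-- `dp m` is the vector `d(k − (m + 1))`. -/
theorem maxplus_explicit_state_equation_general {n M p : ℕ} (hM : 0 < M)
    (Tk : Matrix (Fin n) (Fin n) MaxPlus)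
    (hToff : ∀ i j : Fin n, i ≠ j → Tk i j = 0)
    (G : Fin (M + 1) → Matrix (Fin n) (Fin n) MaxPlus)
    (hbound : ∀ q i j, HasWalk (G 0) q i j → q ≤ p)
    (dp : Fin M → (Fin n → MaxPlus)) (d : Fin n → MaxPlus) :
    d = (Tk * (G 0).transpose).mulVec d + Tk.mulVec (dp ⟨0, hM⟩)
          + Tk.mulVec (∑ m : Fin M, ((G m.succ).transpose).mulVec (dp m)) ↔
    d = ∑ m : Fin M,
          (if (m : ℕ) = 0
            then ((1 + Tk * (G 0).transpose) ^ p * Tk * (1 + (G m.succ).transpose))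
            else ((1 + Tk * (G 0).transpose) ^ p * Tk * (G m.succ).transpose)).mulVec
            (dp m) := by
  have hnil : (Tk * (G 0)ᵀ) ^ (p + 1) = 0 :=
    pow_succ_eq_zero_of_isDiag_mul_transpose (fun i j hij => hToff i j hij) hbound
  rw [add_assoc, eq_mulVec_add_iff_of_pow_eq_zero hnil,
    ← one_add_pow_eq_geom_sum (one_add_one_eq_one (Tropical.add_self 1))]
  obtain _ | M := M
  · exact absurd hM (lt_irrefl 0)
  simp [Fin.sum_univ_succ, mulVec_add, add_mulVec, mulVec_mulVec, mulVec_sum, mul_add, mul_assoc,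
    add_assoc]

/-- Explicit solution of the implicit max-plus recursion
`d(k) = 𝒯ₖ ⊗ G₀ᵀ ⊗ d(k) ⊕ 𝒯ₖ ⊗ d(k−1) ⊕ 𝒯ₖ ⊗ Σ_{m=1}^{M} G_mᵀ ⊗ d(k−m)`:
when `𝒯ₖ` is diagonal with non-`ε` diagonal and the graph of `G₀` is acyclic with
longest path length `p`, a vector `d` satisfies the implicit equation iff
`d = Σ_{m=1}^{M} T_m(k) ⊗ d(k−m)` with
`T₁(k) = (E ⊕ 𝒯ₖ ⊗ G₀ᵀ)^p ⊗ 𝒯ₖ ⊗ (E ⊕ G₁ᵀ)` and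
`T_m(k) = (E ⊕ 𝒯ₖ ⊗ G₀ᵀ)^p ⊗ 𝒯ₖ ⊗ G_mᵀ` for `m ≥ 2`.
Here `dp m` stands for the given vector `d(k−(m+1))`, `m = 0, …, M−1`. -/
theorem maxplus_explicit_state_equation {n M p : ℕ} (hM : 0 < M)
    (Tk : Matrix (Fin n) (Fin n) MaxPlus)
    (hToff : ∀ i j : Fin n, i ≠ j → Tk i j = 0) (hTdiag : ∀ i : Fin n, Tk i i ≠ 0)
    (G : Fin (M + 1) → Matrix (Fin n) (Fin n) MaxPlus)
    (hG01 : ∀ m i j, G m i j = 0 ∨ G m i j = 1)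
    (hacyclic : ∀ q > 0, ∀ i, ¬ HasWalk (G 0) q i i)
    (hlongest : ∃ i j, HasWalk (G 0) p i j)
    (hbound : ∀ q i j, HasWalk (G 0) q i j → q ≤ p)
    (dp : Fin M → (Fin n → MaxPlus)) (d : Fin n → MaxPlus) :
    d = (Tk * (G 0).transpose).mulVec d + Tk.mulVec (dp ⟨0, hM⟩)
          + Tk.mulVec (∑ m : Fin M, ((G m.succ).transpose).mulVec (dp m)) ↔
    d = ∑ m : Fin M,
          (if (m : ℕ) = 0
            then ((1 + Tk * (G 0).transpose) ^ p * Tk * (1 + (G m.succ).transpose))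
            else ((1 + Tk * (G 0).transpose) ^ p * Tk * (G m.succ).transpose)).mulVec
            (dp m) :=
  maxplus_explicit_state_equation_general hM Tk hToff G hbound dp d
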